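/- arXiv:2408.05762 — 2 statements merged into one kernel-verified Lean document; each statement's English description precedes it below -/
import Mathlib

section
/- Let G = (V, E) be an acyclic digraph with distinct vertices s, t, t' such that t and t' are exactly the vertices of G having no outgoing edges, let n = |V|, and let G' be the digraph with vertex set V ∪ U, where U = {u_1, …, u_n} are n fresh vertices, and whose edges are: all edges of E; an edge (x, s) for every vertex x of G'; an edge (t, x) for every vertex x of G'; and the edges (t', u_1), (u_1, u_2), …, (u_{n−1}, u_n), (u_n, t). If G contains no (s,t)-path, then every (s,t)-path in G' has length at least n + 1. -/
variable {V : Type*}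

/-- There is a path (walk) of length `n` from `u` to `v` in the digraph with
edge relation `E`: a sequence `u = f 0, f 1, …, f n = v` of vertices with
`(f i, f (i+1))` an edge for all `i < n`. Vertices and edges may repeat. -/
def IsPathOfLength (E : V → V → Prop) (u v : V) (n : ℕ) : Prop :=
  ∃ f : ℕ → V, f 0 = u ∧ f n = v ∧ ∀ i < n, E (f i) (f (i + 1))

/-- There is a `(u,v)`-path (of some length). -/
def HasPath (E : V → V → Prop) (u v : V) : Prop :=
  ∃ n, IsPathOfLength E u v n

/-- A digraph is strongly connected if there is a path between every pair of vertices. -/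
def StronglyConnected (E : V → V → Prop) : Prop :=
  ∀ u v, HasPath E u v

/-- The set of lengths of cycles (paths of positive length from a vertex to itself). -/
def cycleLengths (E : V → V → Prop) : Set ℕ :=
  {n | 0 < n ∧ ∃ v, IsPathOfLength E v v n}

/-- A digraph is acyclic if it has no cycle. -/
def Acyclic (E : V → V → Prop) : Prop :=
  ∀ (v : V) (n : ℕ), 0 < n → ¬ IsPathOfLength E v v n

/-- `p` is the greatest common divisor of the set `S` of natural numbers:
`p` divides every element of `S`, and every common divisor of `S` divides `p`. -/
def IsSetGcd (S : Set ℕ) (p : ℕ) : Prop :=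
  (∀ n ∈ S, p ∣ n) ∧ ∀ q : ℕ, (∀ n ∈ S, q ∣ n) → q ∣ p

/-- `u` and `v` are in the same strongly connected component. -/
def SameSCC (E : V → V → Prop) (u v : V) : Prop :=
  HasPath E u v ∧ HasPath E v u

/-- The set of lengths of cycles contained in the strongly connected component of `c`. -/
def compCycleLengths (E : V → V → Prop) (c : V) : Set ℕ :=
  {n | 0 < n ∧ ∃ v, SameSCC E v c ∧ IsPathOfLength E v v n}

/-- `P` is the period of the digraph `E`: the least common multiple of the periods
(gcds of cycle lengths) of the strongly connected components containing at least one
cycle. Characterised by divisibility: every such component period divides `P`, and `P`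
divides every common multiple of the component periods. -/
def IsDigraphPeriod (E : V → V → Prop) (P : ℕ) : Prop :=
  (∀ (c : V) (p : ℕ), (compCycleLengths E c).Nonempty →
      IsSetGcd (compCycleLengths E c) p → p ∣ P) ∧
  ∀ Q : ℕ, (∀ (c : V) (p : ℕ), (compCycleLengths E c).Nonempty →
      IsSetGcd (compCycleLengths E c) p → p ∣ Q) → P ∣ Q

/-- There is a path of length `n` from `u` to `v` passing through the vertex `c`. -/
def IsPathThruOfLength (E : V → V → Prop) (u v c : V) (n : ℕ) : Prop :=
  ∃ f : ℕ → V, f 0 = u ∧ f n = v ∧ (∀ i < n, E (f i) (f (i + 1))) ∧ ∃ m ≤ n, f m = c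

/-- Adjacency in the undirected graph `G'_k`: vertices `(u, i)` and `(v, j)` of
`V × ZMod k` are adjacent iff `(u,v) ∈ E` and `j = i + 1 (mod k)` (in either direction). -/
def GkAdj (E : V → V → Prop) (k : ℕ) (a b : V × ZMod k) : Prop :=
  (E a.1 b.1 ∧ b.2 = a.2 + 1) ∨ (E b.1 a.1 ∧ a.2 = b.2 + 1)

/-- Two vertices of `G'_k` are joined by an (undirected) path. -/
def GkConn (E : V → V → Prop) (k : ℕ) : V × ZMod k → V × ZMod k → Prop :=
  Relation.ReflTransGen (GkAdj E k)

/-- The edge relation of the digraph `G'` on `V ⊕ Fin n` (where `Sum.inr i` is the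
fresh vertex `u_{i+1}`): all edges of `E`; an edge from every vertex to `s`; an edge
from `t` to every vertex; and the path `t' → u_1 → ⋯ → u_n → t`. -/
def ExtAdj (E : V → V → Prop) (s t tp : V) (n : ℕ) :
    (V ⊕ Fin n) → (V ⊕ Fin n) → Prop := fun x y =>
  (∃ a b, E a b ∧ x = Sum.inl a ∧ y = Sum.inl b) ∨
  (y = Sum.inl s) ∨
  (x = Sum.inl t) ∨
  (∃ i j : Fin n, x = Sum.inr i ∧ y = Sum.inr j ∧ (j : ℕ) = (i : ℕ) + 1) ∨
  (x = Sum.inl tp ∧ ∃ i : Fin n, y = Sum.inr i ∧ (i : ℕ) = 0) ∨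
  (∃ i : Fin n, x = Sum.inr i ∧ (i : ℕ) = n - 1 ∧ y = Sum.inl t)

lemma hasPath_refl (E : V → V → Prop) (u : V) : HasPath E u u :=
  ⟨0, fun _ => u, rfl, rfl, fun i hi => absurd hi (by omega)⟩

lemma hasPath_snoc {E : V → V → Prop} {u v w : V} (h : HasPath E u v) (e : E v w) :
    HasPath E u w := by
  obtain ⟨k, f, h0, hk, hEf⟩ := h
  refine ⟨k + 1, fun i => if i = k + 1 then w else f i, by simp [h0], by simp, ?_⟩
  intro i hi
  by_cases hik : i = k
  · subst hik
    simp [hk, e, Nat.lt_irrefl]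
  · have hi1 : i + 1 ≠ k + 1 := by omega
    have hi2 : i ≠ k + 1 := by omega
    simp only [hi1, hi2, if_false]
    exact hEf i (by omega)

/-- Under the same construction, if `G` has no `(s,t)`-path, then every
`(s,t)`-path in `G'` has length at least `n + 1`. -/
theorem st_path_length_ge_of_no_path [Fintype V] (E : V → V → Prop)
    (s t tp : V) (n : ℕ) (hn : n = Fintype.card V) (hac : Acyclic E)
    (hst : s ≠ t) (hstp : s ≠ tp) (http : t ≠ tp)
    (hout : ∀ x : V, (∀ y, ¬ E x y) ↔ (x = t ∨ x = tp))
    (hnopath : ¬ HasPath E s t) :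
    ∀ m : ℕ, IsPathOfLength (ExtAdj E s t tp n) (Sum.inl s) (Sum.inl t) m →
      n + 1 ≤ m := by
  classical
  intro m hm
  obtain ⟨f, h0, hm', hEe⟩ := hm
  have hP : ∃ j, f j = Sum.inl t := ⟨m, hm'⟩
  set m0 := Nat.find hP with hm0def
  have hm0 : f m0 = Sum.inl t := Nat.find_spec hP
  have hm0le : m0 ≤ m := Nat.find_min' hP hm'
  have hmin : ∀ j < m0, f j ≠ Sum.inl t := fun j hj => Nat.find_min hP hj
  have hm0pos : 1 ≤ m0 := by
    by_contra h
    have h00 : m0 = 0 := by omega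
    rw [h00] at hm0
    rw [h0] at hm0
    exact hst (Sum.inl.inj hm0)
  have claim : ∀ j, j < m0 →
      (∃ v, f j = Sum.inl v ∧ HasPath E s v) ∨
      (∃ i : Fin n, f j = Sum.inr i ∧ (i : ℕ) < j) := by
    intro j
    induction j with
    | zero => intro _; exact Or.inl ⟨s, h0, hasPath_refl E s⟩
    | succ j ih =>
      intro hj1
      have hj : j < m0 := by omega
      have hjm : j < m := by omega
      rcases hEe j hjm with ⟨a, b, hab, hxa, hyb⟩ | hys | hxt |
        ⟨i, j', hxi, hyj, hji⟩ | ⟨hxtp, i, hyi, hi0⟩ | ⟨i, hxi, hin, hyt⟩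
      · rcases ih hj with ⟨v, hfv, hpath⟩ | ⟨i, hfi, _⟩
        · have hva : v = a := by rw [hfv] at hxa; exact Sum.inl.inj hxa
          exact Or.inl ⟨b, hyb, hasPath_snoc hpath (hva ▸ hab)⟩
        · rw [hfi] at hxa; simp at hxa
      · exact Or.inl ⟨s, hys, hasPath_refl E s⟩
      · exact absurd hxt (hmin j hj)
      · rcases ih hj with ⟨v, hfv, _⟩ | ⟨i', hfi, hlt⟩
        · rw [hfv] at hxi; simp at hxi
        · have : i' = i := by rw [hfi] at hxi; exact Sum.inr.inj hxi
          subst this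
          exact Or.inr ⟨j', hyj, by omega⟩
      · exact Or.inr ⟨i, hyi, by omega⟩
      · exact absurd hyt (hmin (j + 1) hj1)
  have hjm0 : m0 - 1 < m0 := by omega
  have hjlt : m0 - 1 < m := by omega
  have hsucc : m0 - 1 + 1 = m0 := by omega
  have hedge := hEe (m0 - 1) hjlt
  rw [hsucc] at hedge
  rcases claim (m0 - 1) hjm0 with ⟨v, hfv, hpath⟩ | ⟨i, hfi, hlt⟩
  · rcases hedge with ⟨a, b, hab, hxa, hyb⟩ | hys | hxt |
      ⟨i, j', hxi, hyj, hji⟩ | ⟨hxtp, i, hyi, hi0⟩ | ⟨i, hxi, hin, hyt⟩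
    · have hva : v = a := by rw [hfv] at hxa; exact Sum.inl.inj hxa
      have hbt : b = t := by rw [hm0] at hyb; exact (Sum.inl.inj hyb).symm
      exact absurd (hasPath_snoc hpath (hva ▸ hbt ▸ hab)) hnopath
    · rw [hm0] at hys; exact absurd (Sum.inl.inj hys).symm hst
    · exact absurd hxt (hmin (m0 - 1) hjm0)
    · rw [hm0] at hyj; simp at hyj
    · rw [hm0] at hyi; simp at hyi
    · rw [hfv] at hxi; simp at hxi
  · rcases hedge with ⟨a, b, hab, hxa, hyb⟩ | hys | hxt |
      ⟨i', j', hxi, hyj, hji⟩ | ⟨hxtp, i', hyi, hi0⟩ | ⟨i', hxi, hin, hyt⟩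
    · rw [hfi] at hxa; simp at hxa
    · rw [hm0] at hys; exact absurd (Sum.inl.inj hys).symm hst
    · rw [hfi] at hxt; simp at hxt
    · rw [hm0] at hyj; simp at hyj
    · rw [hfi] at hxtp; simp at hxtp
    · have : i = i' := by rw [hfi] at hxi; exact Sum.inr.inj hxi
      subst this
      have hilt := i.isLt
      omega
end

section
/- Let G = (V, E) be an acyclic digraph with distinct vertices s, t, t' such that t and t' are exactly the vertices of G having no outgoing edges, let n = |V|, and let G' be the digraph with vertex set V ∪ U, where U = {u_1, …, u_n} are n fresh vertices, and whose edges are: all edges of E; an edge (x, s) for every vertex x of G'; an edge (t, x) for every vertex x of G'; and the edges (t', u_1), (u_1, u_2), …, (u_{n−1}, u_n), (u_n, t). Then G' is strongly connected and the greatest common divisor of the lengths of all cycles of G' equals 1. -/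
variable {V : Type*}

lemma isPath_single {E : V → V → Prop} {u v : V} (h : E u v) : IsPathOfLength E u v 1 := by
  refine ⟨fun i => if i = 0 then u else v, by simp, by simp, ?_⟩
  intro i hi
  have : i = 0 := by omega
  subst this; simpa using h

lemma hasPath_single {E : V → V → Prop} {u v : V} (h : E u v) : HasPath E u v :=
  ⟨1, isPath_single h⟩

lemma hasPath_trans {E : V → V → Prop} {u v w : V}
    (h1 : HasPath E u v) (h2 : HasPath E v w) : HasPath E u w := by
  obtain ⟨m, f, hf0, hfm, hfe⟩ := h1
  obtain ⟨k, g, hg0, hgk, hge⟩ := h2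
  refine ⟨m + k, fun i => if i < m then f i else g (i - m), ?_, ?_, ?_⟩
  · rcases Nat.eq_zero_or_pos m with h | h
    · subst h
      have hgu : g 0 = u := by rw [hg0, ← hfm, hf0]
      simpa using hgu
    · simp [h, hf0]
  · have : ¬ m + k < m := by omega
    simp [this, hgk]
  · intro i hi
    by_cases h1 : i + 1 < m
    · have : i < m := by omega
      simp only [this, h1, if_pos]
      exact hfe i (by omega)
    · by_cases h2 : i < m
      · have him : i + 1 = m := by omega
        have rhs : g (i + 1 - m) = f (i + 1) := by
          rw [him, Nat.sub_self, hg0]; exact hfm.symm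
        simp only [if_pos h2, if_neg h1]
        rw [rhs]
        exact hfe i (by omega)
      · simp only [if_neg h2, if_neg h1]
        have : i + 1 - m = (i - m) + 1 := by omega
        rw [this]
        exact hge (i - m) (by omega)

lemma transGen_path {E : V → V → Prop} {a b : V} (h : Relation.TransGen E a b) :
    ∃ k, 0 < k ∧ IsPathOfLength E a b k := by
  induction h with
  | single h => exact ⟨1, one_pos, isPath_single h⟩
  | @tail b c h hbc ih =>
    obtain ⟨k, hk, f, hf0, hfk, hfe⟩ := ih
    refine ⟨k + 1, by omega, fun i => if i ≤ k then f i else c, ?_, ?_, ?_⟩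
    · simp [hf0]
    · simp
    · intro i hi
      by_cases h2 : i + 1 ≤ k
      · have : i ≤ k := by omega
        simp only [this, h2, if_pos]
        exact hfe i (by omega)
      · have hik : i = k := by omega
        simp [hik, hfk, hbc]

/-- Under the same construction, `G'` is strongly connected and the gcd
of the lengths of all its cycles equals `1`. -/
theorem ext_digraph_primitive [Fintype V] (E : V → V → Prop)
    (s t tp : V) (n : ℕ) (hn : n = Fintype.card V) (hac : Acyclic E)
    (hst : s ≠ t) (hstp : s ≠ tp) (http : t ≠ tp)
    (hout : ∀ x : V, (∀ y, ¬ E x y) ↔ (x = t ∨ x = tp)) :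
    StronglyConnected (ExtAdj E s t tp n) ∧
    ∀ p : ℕ, IsSetGcd (cycleLengths (ExtAdj E s t tp n)) p → p = 1 := by
  set A := ExtAdj E s t tp n with hA
  have hn1 : 0 < n := by
    subst hn; exact Fintype.card_pos_iff.mpr ⟨s⟩
  -- every vertex has an edge to s
  have hto_s : ∀ x, A x (Sum.inl s) := fun x => Or.inr (Or.inl rfl)
  -- t has an edge to every vertex
  have hfrom_t : ∀ y, A (Sum.inl t) y := fun y => Or.inr (Or.inr (Or.inl rfl))
  -- path from tp to t through the fresh vertices
  have htp_t : HasPath A (Sum.inl tp) (Sum.inl t) := by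
    refine ⟨n + 1, fun i => if i = 0 then Sum.inl tp else
      if h : i ≤ n then Sum.inr ⟨i - 1, by omega⟩ else Sum.inl t, by simp, ?_, ?_⟩
    · have h1 : ¬ (n + 1 = 0) := by omega
      have h2 : ¬ (n + 1 ≤ n) := by omega
      simp [h1, h2]
    · intro i hi
      rcases Nat.eq_zero_or_pos i with h0 | h0
      · subst h0
        have h1 : (1 : ℕ) ≤ n := hn1
        simp only [if_pos rfl, if_neg (by omega : ¬ (1 = 0)), dif_pos h1]
        exact Or.inr (Or.inr (Or.inr (Or.inr (Or.inl ⟨rfl, ⟨1 - 1, by omega⟩, rfl, rfl⟩))))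
      · by_cases h2 : i < n
        · have e1 : ¬ (i = 0) := by omega
          have e2 : i ≤ n := by omega
          have e3 : ¬ (i + 1 = 0) := by omega
          have e4 : i + 1 ≤ n := by omega
          simp only [if_neg e1, dif_pos e2, if_neg e3, dif_pos e4]
          exact Or.inr (Or.inr (Or.inr (Or.inl ⟨_, _, rfl, rfl, by simp; omega⟩)))
        · have hin : i = n := by omega
          have e1 : ¬ (i = 0) := by omega
          have e2 : i ≤ n := by omega
          have e3 : ¬ (i + 1 = 0) := by omega
          have e4 : ¬ (i + 1 ≤ n) := by omega
          simp only [if_neg e1, dif_pos e2, if_neg e3, dif_neg e4]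
          exact Or.inr (Or.inr (Or.inr (Or.inr (Or.inr ⟨⟨i - 1, by omega⟩, rfl, by simp; omega, rfl⟩))))
  -- acyclicity gives well-foundedness of the reversed transitive closure
  have hirr : ∀ a : V, ¬ Relation.TransGen E a a := by
    intro a h
    obtain ⟨k, hk, hp⟩ := transGen_path h
    exact hac a k hk hp
  have hwf : WellFounded (fun a b : V => Relation.TransGen E b a) := by
    have : IsTrans V (fun a b : V => Relation.TransGen E b a) :=
      ⟨fun a b c h1 h2 => h2.trans h1⟩
    have : IsIrrefl V (fun a b : V => Relation.TransGen E b a) := ⟨fun a h => hirr a h⟩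
    exact Finite.wellFounded_of_trans_of_irrefl _
  -- every original vertex reaches t
  have hreach : ∀ v : V, HasPath A (Sum.inl v) (Sum.inl t) := by
    intro v
    induction v using hwf.induction with
    | _ v ih =>
      by_cases hvt : v = t
      · subst hvt; exact hasPath_refl A _
      · by_cases hvtp : v = tp
        · subst hvtp; exact htp_t
        · have : ¬ ∀ y, ¬ E v y := by
            rw [hout]; push_neg; exact ⟨hvt, hvtp⟩
          push_neg at this
          obtain ⟨w, hw⟩ := this
          have step : A (Sum.inl v) (Sum.inl w) := Or.inl ⟨v, w, hw, rfl, rfl⟩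
          exact hasPath_trans (hasPath_single step) (ih w (Relation.TransGen.single hw))
  constructor
  · intro u v
    refine hasPath_trans (hasPath_single (hto_s u)) ?_
    refine hasPath_trans (hreach s) (hasPath_single (hfrom_t v))
  · intro p hp
    have hone : (1 : ℕ) ∈ cycleLengths A := by
      exact ⟨one_pos, Sum.inl s, isPath_single (hto_s (Sum.inl s))⟩
    exact Nat.dvd_one.mp (hp.1 1 hone)
end
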